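/- Let T be a finite connected graph satisfying property P and let 2 ≤ m < χ(T). Then the chromatic number of the exponential graph K_m^T equals m. -/

import Mathlib

/-- A finite graph in the sense of the paper: a symmetric adjacency relation,
loops are allowed. -/
structure LGraph (V : Type) where
  Adj : V → V → Prop
  symm : ∀ {u v}, Adj u v → Adj v u

namespace LGraph

variable {α β : Type}

/-- The complete graph `K_m` on vertex set `Fin m`. -/
def completeG (m : ℕ) : LGraph (Fin m) :=
  ⟨fun i j => i ≠ j, fun h => h.symm⟩

/-- `f` is a graph homomorphism from `G` to `H`. -/
def IsHom (G : LGraph α) (H : LGraph β) (f : α → β) : Prop :=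
  ∀ ⦃u v⦄, G.Adj u v → H.Adj (f u) (f v)

/-- `G` admits a proper coloring with `n` colors. -/
def Colorable (G : LGraph α) (n : ℕ) : Prop :=
  ∃ f : α → Fin n, G.IsHom (completeG n) f

/-- The chromatic number of `G`, as an extended natural number. -/
noncomputable def chromNum (G : LGraph α) : ℕ∞ :=
  sInf ((fun k : ℕ => (k : ℕ∞)) '' {k | G.Colorable k})

/-- The neighborhood of a vertex. -/
def neighborSet (G : LGraph α) (v : α) : Set α := {w | G.Adj v w}

/-- The categorical product `G × H`. -/
def tensor (G : LGraph α) (H : LGraph β) : LGraph (α × β) :=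
  ⟨fun p q => G.Adj p.1 q.1 ∧ H.Adj p.2 q.2, fun h => ⟨G.symm h.1, H.symm h.2⟩⟩

/-- The exponential graph `K_m^G`: vertices are all set maps `V(G) → [m]`,
and `f` is adjacent to `g` iff `f u ≠ g v` for every edge `(u,v)` of `G`
(loops are allowed). -/
def expG (G : LGraph α) (m : ℕ) : LGraph (α → Fin m) :=
  ⟨fun f g => ∀ u v, G.Adj u v → f u ≠ g v,
   fun {f g} h u v huv e => h v u (G.symm huv) e.symm⟩

/-- `G` is connected: nonempty and any two vertices are joined by a walk. -/
def Connected (G : LGraph α) : Prop :=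
  Nonempty α ∧ ∀ u v : α, Relation.ReflTransGen G.Adj u v

/-- Property `P` of the paper: `G` is simple, and for any two disjoint edges
`(v1,w1)` and `(v2,w2)`, if `(v2,v1)` is an edge then `(w2,v1)` or `(w2,w1)`
is an edge. -/
def PropertyP (G : LGraph α) : Prop :=
  (∀ v, ¬ G.Adj v v) ∧
  ∀ ⦃v1 w1 v2 w2 : α⦄, G.Adj v1 w1 → G.Adj v2 w2 →
    v1 ≠ v2 → v1 ≠ w2 → w1 ≠ v2 → w1 ≠ w2 →
    G.Adj v2 v1 → (G.Adj w2 v1 ∨ G.Adj w2 w1)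

/-- Base (unsymmetrized) relation for the Mycielskian:
level-0 copies are adjacent as in `G`, a level-1 vertex is adjacent to the
level-0 copies of the neighbours of its shadow, and the apex `none` is
adjacent to all level-1 vertices. -/
def mycRel (G : LGraph α) : Option (α × Bool) → Option (α × Bool) → Prop
  | some (a, false), some (b, false) => G.Adj a b
  | some (a, true), some (b, false) => G.Adj a b
  | none, some (_, true) => True
  | _, _ => False

/-- The Mycielskian `M(G)`. -/
def myc (G : LGraph α) : LGraph (Option (α × Bool)) :=
  ⟨fun u v => G.mycRel u v ∨ G.mycRel v u, fun h => h.symm⟩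

/-- The double Mycielskian `M(M(K_n))`. -/
def MMK (n : ℕ) : LGraph (Option (Option (Fin n × Bool) × Bool)) :=
  myc (myc (completeG n))

/-- The vertex `(x, i, j)` of `M(M(K_n))`. -/
def vtx {n : ℕ} (x : Fin n) (i j : Bool) : Option (Option (Fin n × Bool) × Bool) :=
  some (some (x, i), j)

/-- The vertex `w_i = (*, i)` of `M(M(K_n))` for `i ∈ {0,1}`. -/
def wv (n : ℕ) (i : Bool) : Option (Option (Fin n × Bool) × Bool) :=
  some (none, i)

/-- The apex vertex `w_2` of `M(M(K_n))`. -/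
def w2 (n : ℕ) : Option (Option (Fin n × Bool) × Bool) := none

end LGraph


/-!
Under property `P`, in a connected graph every vertex lies on or next to any given edge `uv`.
If `T` is not `m`-colorable, every `f : V(T) → [m]` has a monochromatic edge `uv`, and then
every neighbour `g` of `f` in `K_m^T` avoids the colour `f u` everywhere: `g x ≠ f u` for `x`
adjacent to `u` or `v`, and `x ∈ {u, v}` is covered by the edge itself. So `f ↦ f u` is a
proper `m`-colouring of `K_m^T`; the `m` constant maps form a clique, giving equality.
-/

namespace LGraph

variable {α : Type}

theorem chromNum_le_of_colorable {G : LGraph α} {n : ℕ} (h : G.Colorable n) :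
    G.chromNum ≤ n :=
  sInf_le ⟨n, h, rfl⟩

theorem chromNum_eq_of_colorable_of_le {G : LGraph α} {n : ℕ} (h : G.Colorable n)
    (hmin : ∀ k, G.Colorable k → n ≤ k) : G.chromNum = n := by
  refine le_antisymm (chromNum_le_of_colorable h) (le_sInf ?_)
  rintro _ ⟨k, hk, rfl⟩
  exact Nat.cast_le.mpr (hmin k hk)

theorem exists_adj_eq_of_not_colorable {G : LGraph α} {n : ℕ} (h : ¬ G.Colorable n)
    (f : α → Fin n) : ∃ u v, G.Adj u v ∧ f u = f v := by
  by_contra! hf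
  exact h ⟨f, fun u v huv => hf u v huv⟩

def IsDominatingEdge (G : LGraph α) (u v : α) : Prop :=
  ∀ x, x = u ∨ x = v ∨ G.Adj u x ∨ G.Adj v x

theorem PropertyP.eq_or_adj_of_adj_of_adj {G : LGraph α} (hP : G.PropertyP) {u v b c : α}
    (huv : G.Adj u v) (hub : G.Adj u b) (hbc : G.Adj b c) :
    c = u ∨ c = v ∨ G.Adj u c ∨ G.Adj v c := by
  by_cases hbv : b = v
  · exact Or.inr (Or.inr (Or.inr (hbv ▸ hbc)))
  by_cases hcu : c = u
  · exact Or.inl hcu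
  by_cases hcv : c = v
  · exact Or.inr (Or.inl hcv)
  have hub' : u ≠ b := fun h => hP.1 u (h ▸ hub)
  rcases hP.2 huv hbc hub' (Ne.symm hcu) (Ne.symm hbv) (Ne.symm hcv) (G.symm hub) with h | h
  · exact Or.inr (Or.inr (Or.inl (G.symm h)))
  · exact Or.inr (Or.inr (Or.inr (G.symm h)))

theorem PropertyP.isDominatingEdge {G : LGraph α} (hconn : G.Connected) (hP : G.PropertyP)
    {u v : α} (huv : G.Adj u v) : G.IsDominatingEdge u v := by
  intro x
  induction hconn.2 u x with
  | refl => exact Or.inl rfl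
  | @tail b c _ hbc ih =>
    rcases ih with rfl | rfl | hub | hvb
    · exact Or.inr (Or.inr (Or.inl hbc))
    · exact Or.inr (Or.inr (Or.inr hbc))
    · exact hP.eq_or_adj_of_adj_of_adj huv hub hbc
    · rcases hP.eq_or_adj_of_adj_of_adj (G.symm huv) hvb hbc with h | h | h | h
      · exact Or.inr (Or.inl h)
      · exact Or.inl h
      · exact Or.inr (Or.inr (Or.inr h))
      · exact Or.inr (Or.inr (Or.inl h))

theorem expG_adj_ne_of_isDominatingEdge {G : LGraph α} {m : ℕ} {f g : α → Fin m}
    (hfg : (expG G m).Adj f g) {u v : α} (huv : G.Adj u v) (hdom : G.IsDominatingEdge u v)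
    (hf : f u = f v) (x : α) : g x ≠ f u := by
  rcases hdom x with rfl | rfl | hux | hvx
  · exact fun e => hfg v x (G.symm huv) (hf.symm.trans e.symm)
  · exact fun e => hfg u x huv e.symm
  · exact fun e => hfg u x hux e.symm
  · exact fun e => hfg v x hvx (hf.symm.trans e.symm)

theorem colorable_expG_of_not_colorable {G : LGraph α} {m : ℕ}
    (hdom : ∀ ⦃u v⦄, G.Adj u v → G.IsDominatingEdge u v) (hG : ¬ G.Colorable m) :
    (expG G m).Colorable m := by
  choose U V hUV hf using exists_adj_eq_of_not_colorable hG
  exact ⟨fun f => f (U f), fun f g hfg e =>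
    expG_adj_ne_of_isDominatingEdge hfg (hUV f) (hdom (hUV f)) (hf f) (U g) e.symm⟩

theorem le_of_colorable_expG {G : LGraph α} {m k : ℕ} (h : (expG G m).Colorable k) :
    m ≤ k := by
  obtain ⟨c, hc⟩ := h
  have hinj : Function.Injective (fun i : Fin m => c (fun _ => i)) := by
    intro i j hij
    by_contra hne
    exact hc (u := fun _ => i) (v := fun _ => j) (fun _ _ _ => hne) hij
  simpa using Fintype.card_le_of_injective _ hinj

end LGraph

namespace Graph

theorem chromNum_expG_eq {α : Type} (T : LGraph α)
    (hconn : T.Connected) (hP : T.PropertyP) (m : ℕ)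
    (hmlt : (m : ℕ∞) < T.chromNum) :
    (LGraph.expG T m).chromNum = m := by
  have hT : ¬ T.Colorable m := fun h => (LGraph.chromNum_le_of_colorable h).not_gt hmlt
  exact LGraph.chromNum_eq_of_colorable_of_le
    (LGraph.colorable_expG_of_not_colorable (fun _ _ => hP.isDominatingEdge hconn) hT)
    (fun _ => LGraph.le_of_colorable_expG)

end Graph
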